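/- arXiv:2312.09752 — 2 statements merged into one kernel-verified Lean document; each statement's English description precedes it below -/
import Mathlib

section
/- Error splitting for the localized methods: let Q : V → V be a linear operator with Π_H(Q v) = Π_H v for all v ∈ V, let 𝒞 : V → W be the K-orthogonal projection onto W (i.e. (K 𝒞v, w) = (K v, w) for all w ∈ W), let 𝒞^ℓ : V → W be any linear map, and let V_H^ℓ be the image of the map v ↦ Q v − 𝒞^ℓ(Q v) on V. If u_H^ℓ ∈ V_H^ℓ solves (K u_H^ℓ, v) = (f, v) for all v ∈ V_H^ℓ, and u_H := u − 𝒞u, then |u − u_H^ℓ|_L ≤ γ⁻¹ γ′ ( |u − u_H|_L + |𝒞(Q u) − 𝒞^ℓ(Q u)|_L ). -/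
open Finset

variable {n : ℕ} {N : Type*}

/-- The (edge-weighted) mass bilinear form `(M_S u, v)`. -/
noncomputable def Mform [Fintype N] (G : SimpleGraph N) [DecidableRel G.Adj]
    (pos : N → EuclideanSpace ℝ (Fin n)) (α : ℝ) (S : Finset N) (u v : N → ℝ) : ℝ :=
  ∑ x ∈ S, (1 / 2 : ℝ) * ∑ y ∈ G.neighborFinset x,
    dist (pos x) (pos y) ^ ((2 : ℝ) - α) * (u x * v x)

/-- The (edge-weighted) stiffness bilinear form `(L_S u, v)`. -/
noncomputable def Lform [Fintype N] (G : SimpleGraph N) [DecidableRel G.Adj]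
    (pos : N → EuclideanSpace ℝ (Fin n)) (α : ℝ) (S : Finset N) (u v : N → ℝ) : ℝ :=
  ∑ x ∈ S, (1 / 2 : ℝ) * ∑ y ∈ G.neighborFinset x,
    ((u x - u y) * (v x - v y)) / dist (pos x) (pos y) ^ α

/-- `|v|_{M,S}`. -/
noncomputable def Mnorm [Fintype N] (G : SimpleGraph N) [DecidableRel G.Adj]
    (pos : N → EuclideanSpace ℝ (Fin n)) (α : ℝ) (S : Finset N) (v : N → ℝ) : ℝ :=
  Real.sqrt (Mform G pos α S v v)

/-- `|v|_{L,S}`. -/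
noncomputable def Lnorm [Fintype N] (G : SimpleGraph N) [DecidableRel G.Adj]
    (pos : N → EuclideanSpace ℝ (Fin n)) (α : ℝ) (S : Finset N) (v : N → ℝ) : ℝ :=
  Real.sqrt (Lform G pos α S v v)

/-- The element average `q_T(v) = (M_T v, 1) / |1|_{M,T}^2`. -/
noncomputable def avg [Fintype N] (G : SimpleGraph N) [DecidableRel G.Adj]
    (pos : N → EuclideanSpace ℝ (Fin n)) (α : ℝ) (T : Finset N) (v : N → ℝ) : ℝ :=
  Mform G pos α T v (fun _ => 1) / Mform G pos α T (fun _ => 1) (fun _ => 1)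

/-- Euclidean inner product of functions on the node set. -/
noncomputable def ip [Fintype N] (u v : N → ℝ) : ℝ := ∑ x, u x * v x

/-- Length of a walk: the sum of Euclidean edge lengths. -/
noncomputable def wlen (G : SimpleGraph N) (pos : N → EuclideanSpace ℝ (Fin n))
    {x y : N} (w : G.Walk x y) : ℝ :=
  (w.darts.map (fun d => dist (pos d.toProd.1) (pos d.toProd.2))).sum

/-- Graph distance from `x` to the boundary set `bnd`, along paths inside `T`. -/
noncomputable def distT (G : SimpleGraph N) (pos : N → EuclideanSpace ℝ (Fin n))
    (T bnd : Finset N) (x : N) : ℝ :=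
  sInf {ℓ : ℝ | ∃ y ∈ bnd, ∃ w : G.Walk x y, (∀ z ∈ w.support, z ∈ T) ∧ ℓ = wlen G pos w}

/-- The non-normalized bubble function `b̃_T`. -/
noncomputable def btilde [DecidableEq N] (G : SimpleGraph N) (pos : N → EuclideanSpace ℝ (Fin n))
    (T bnd : Finset N) : N → ℝ :=
  fun x => if x ∈ T then distT G pos T bnd x else 0
section Aux
variable [Fintype N] (G : SimpleGraph N) [DecidableRel G.Adj]
    (pos : N → EuclideanSpace ℝ (Fin n)) (α : ℝ)

lemma ip_sub_left (p q r : N → ℝ) : ip (fun x => p x - q x) r = ip p r - ip q r := by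
  simp [ip, sub_mul, Finset.sum_sub_distrib]

lemma ip_add_left (p q r : N → ℝ) : ip (fun x => p x + q x) r = ip p r + ip q r := by
  simp [ip, add_mul, Finset.sum_add_distrib]

lemma ip_sub_right (p a b : N → ℝ) : ip p (fun x => a x - b x) = ip p a - ip p b := by
  simp [ip, mul_sub, Finset.sum_sub_distrib]

lemma Lform_nonneg (S : Finset N) (v : N → ℝ) : 0 ≤ Lform G pos α S v v := by
  apply Finset.sum_nonneg; intro x _
  apply mul_nonneg (by norm_num)
  apply Finset.sum_nonneg; intro y _
  exact div_nonneg (mul_self_nonneg _) (Real.rpow_nonneg dist_nonneg α)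

lemma Lform_poly (S : Finset N) (a b : N → ℝ) (t : ℝ) :
    Lform G pos α S (fun x => a x + t * b x) (fun x => a x + t * b x)
      = Lform G pos α S a a + 2 * Lform G pos α S a b * t + Lform G pos α S b b * t ^ 2 := by
  simp only [Lform, Finset.mul_sum, Finset.sum_mul, ← Finset.sum_add_distrib]
  refine Finset.sum_congr rfl fun x _ => ?_
  refine Finset.sum_congr rfl fun y _ => by ring

lemma cs_aux {a b c : ℝ} (ha : 0 ≤ a)
    (h : ∀ t : ℝ, 0 ≤ a + 2 * b * t + c * t ^ 2) : b ≤ Real.sqrt a * Real.sqrt c := by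
  have hd := discrim_le_zero (a := c) (b := 2 * b) (c := a) (fun x => by
    have := h x; nlinarith [h x])
  rw [discrim] at hd
  calc b ≤ |b| := le_abs_self b
    _ = Real.sqrt (b ^ 2) := (Real.sqrt_sq_eq_abs b).symm
    _ ≤ Real.sqrt (a * c) := Real.sqrt_le_sqrt (by nlinarith)
    _ = Real.sqrt a * Real.sqrt c := Real.sqrt_mul ha c

lemma Lform_cs (S : Finset N) (a b : N → ℝ) :
    Lform G pos α S a b ≤ Lnorm G pos α S a * Lnorm G pos α S b := by
  refine cs_aux (Lform_nonneg G pos α S a) fun t => ?_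
  rw [← Lform_poly]
  exact Lform_nonneg G pos α S _

lemma Lnorm_triangle (S : Finset N) (a b : N → ℝ) :
    Lnorm G pos α S (fun x => a x + b x) ≤ Lnorm G pos α S a + Lnorm G pos α S b := by
  have h1 := Lform_poly G pos α S a b 1
  simp only [one_mul, one_pow, mul_one] at h1
  have hcs := Lform_cs G pos α S a b
  have ha := Lform_nonneg G pos α S a
  have hb := Lform_nonneg G pos α S b
  unfold Lnorm
  rw [h1]
  calc Real.sqrt (Lform G pos α S a a + 2 * Lform G pos α S a b + Lform G pos α S b b)
      ≤ Real.sqrt ((Real.sqrt (Lform G pos α S a a) + Real.sqrt (Lform G pos α S b b)) ^ 2) := by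
        apply Real.sqrt_le_sqrt
        have h2 : Real.sqrt (Lform G pos α S a a) ^ 2 = Lform G pos α S a a := Real.sq_sqrt ha
        have h3 : Real.sqrt (Lform G pos α S b b) ^ 2 = Lform G pos α S b b := Real.sq_sqrt hb
        have h4 : Lform G pos α S a b ≤ Real.sqrt (Lform G pos α S a a) * Real.sqrt (Lform G pos α S b b) := hcs
        nlinarith
    _ = Real.sqrt (Lform G pos α S a a) + Real.sqrt (Lform G pos α S b b) :=
        Real.sqrt_sq (by positivity)

lemma Lnorm_neg_swap (S : Finset N) (a b : N → ℝ) :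
    Lnorm G pos α S (fun x => a x - b x) = Lnorm G pos α S (fun x => b x - a x) := by
  unfold Lnorm; congr 1
  unfold Lform
  refine Finset.sum_congr rfl fun x _ => ?_
  congr 1
  refine Finset.sum_congr rfl fun y _ => ?_
  ring

lemma Mform_sub_left (S : Finset N) (a b v : N → ℝ) :
    Mform G pos α S (fun x => a x - b x) v = Mform G pos α S a v - Mform G pos α S b v := by
  simp only [Mform, ← Finset.sum_sub_distrib, ← mul_sub]
  refine Finset.sum_congr rfl fun x _ => ?_
  congr 1
  exact Finset.sum_congr rfl fun y _ => by ring

lemma Mform_add_left (S : Finset N) (a b v : N → ℝ) :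
    Mform G pos α S (fun x => a x + b x) v = Mform G pos α S a v + Mform G pos α S b v := by
  simp only [Mform, ← Finset.sum_add_distrib, ← mul_add]
  refine Finset.sum_congr rfl fun x _ => ?_
  congr 1
  exact Finset.sum_congr rfl fun y _ => by ring

lemma avg_sub (T : Finset N) (a b : N → ℝ) :
    avg G pos α T (fun x => a x - b x) = avg G pos α T a - avg G pos α T b := by
  unfold avg; rw [Mform_sub_left, sub_div]

lemma avg_add (T : Finset N) (a b : N → ℝ) :
    avg G pos α T (fun x => a x + b x) = avg G pos α T a + avg G pos α T b := by
  unfold avg; rw [Mform_add_left, add_div]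

end Aux

theorem stmt16 [Fintype N] [DecidableEq N] (G : SimpleGraph N) [DecidableRel G.Adj]
    (pos : N → EuclideanSpace ℝ (Fin n)) (α : ℝ)
    (hα : 0 ≤ α ∧ α ≤ 2) (hpos : Function.Injective pos)
    (hdist : ∀ x y : N, G.Adj x y → 0 < dist (pos x) (pos y))
    (hcard : 1 < Fintype.card N) (hconn : G.Connected)
    (Γ : Set N) (hΓ : Γ.Nonempty)
    (P : Finset (Finset N))
    (hPne : ∀ T ∈ P, T.Nonempty)
    (hPdisj : ∀ T ∈ P, ∀ S ∈ P, T ≠ S → Disjoint T S)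
    (hPcover : ∀ x : N, ∃ T ∈ P, x ∈ T)
    (Pi : (N → ℝ) → (N → ℝ))
    (hPi : ∀ v : N → ℝ, ∀ T ∈ P, ∀ x ∈ T, Pi v x = avg G pos α T v)
    (K : (N → ℝ) →ₗ[ℝ] (N → ℝ))
    (hKsym : ∀ u v : N → ℝ, ip (K u) v = ip u (K v))
    (γ γ' : ℝ) (hγ : 0 < γ) (hγγ' : γ ≤ γ')
    (hspec : ∀ v : N → ℝ, (∀ x ∈ Γ, v x = 0) →
      γ * Lform G pos α Finset.univ v v ≤ ip (K v) v ∧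
        ip (K v) v ≤ γ' * Lform G pos α Finset.univ v v)
    (f u : N → ℝ) (hu : ∀ x ∈ Γ, u x = 0)
    (hsol : ∀ v : N → ℝ, (∀ x ∈ Γ, v x = 0) → ip (K u) v = ip f v)
    (Q : (N → ℝ) →ₗ[ℝ] (N → ℝ))
    (hQV : ∀ v : N → ℝ, (∀ x ∈ Γ, v x = 0) → ∀ x ∈ Γ, Q v x = 0)
    (hQPi : ∀ v : N → ℝ, (∀ x ∈ Γ, v x = 0) → Pi (Q v) = Pi v)
    (C : (N → ℝ) → (N → ℝ))
    (hCW : ∀ v : N → ℝ, (∀ x ∈ Γ, v x = 0) → (∀ x ∈ Γ, C v x = 0) ∧ Pi (C v) = 0)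
    (hCproj : ∀ v : N → ℝ, (∀ x ∈ Γ, v x = 0) →
      ∀ w : N → ℝ, ((∀ x ∈ Γ, w x = 0) ∧ Pi w = 0) → ip (K (C v)) w = ip (K v) w)
    (Cl : (N → ℝ) →ₗ[ℝ] (N → ℝ))
    (hClW : ∀ v : N → ℝ, (∀ x ∈ Γ, v x = 0) → (∀ x ∈ Γ, Cl v x = 0) ∧ Pi (Cl v) = 0)
    (uHl : N → ℝ)
    (huHlmem : ∃ v : N → ℝ, (∀ x ∈ Γ, v x = 0) ∧ uHl = Q v - Cl (Q v))
    (huHlsol : ∀ z : N → ℝ, (∃ v : N → ℝ, (∀ x ∈ Γ, v x = 0) ∧ z = Q v - Cl (Q v)) →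
      ip (K uHl) z = ip f z)
    (uH : N → ℝ) (huH : uH = u - C u) :
    Lnorm G pos α Finset.univ (fun x => u x - uHl x) ≤
      γ⁻¹ * γ' * (Lnorm G pos α Finset.univ (fun x => u x - uH x) +
        Lnorm G pos α Finset.univ (fun x => C (Q u) x - Cl (Q u) x)) := by
  have hγ' : (0:ℝ) < γ' := lt_of_lt_of_le hγ hγγ'
  have hQu : ∀ x ∈ Γ, Q u x = 0 := hQV u hu
  have hCQu := hCW (Q u) hQu
  have hClQu := hClW (Q u) hQu
  have hCu := hCW u hu
  obtain ⟨v0, hv0, hv0eq⟩ := huHlmem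
  have hQv0 : ∀ x ∈ Γ, Q v0 x = 0 := hQV v0 hv0
  have hClQv0 := hClW (Q v0) hQv0
  have huHlV : ∀ x ∈ Γ, uHl x = 0 := by
    intro x hx
    rw [hv0eq]
    show Q v0 x - Cl (Q v0) x = 0
    rw [hQv0 x hx, hClQv0.1 x hx, sub_zero]
  -- the comparison element w ∈ V_H^ℓ
  have hwV : ∀ x ∈ Γ, (fun x => Q u x - Cl (Q u) x) x = 0 := by
    intro x hx
    show Q u x - Cl (Q u) x = 0
    rw [hQu x hx, hClQu.1 x hx, sub_zero]
  have hwmem : ∃ v : N → ℝ, (∀ x ∈ Γ, v x = 0) ∧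
      (fun x => Q u x - Cl (Q u) x) = Q v - Cl (Q v) :=
    ⟨u, hu, rfl⟩
  set e : N → ℝ := fun x => u x - uHl x with he
  have heV : ∀ x ∈ Γ, e x = 0 := by
    intro x hx; show u x - uHl x = 0; rw [hu x hx, huHlV x hx, sub_zero]
  set g : N → ℝ := fun x => u x - (Q u x - Cl (Q u) x) with hg
  have hgV : ∀ x ∈ Γ, g x = 0 := by
    intro x hx; show u x - (Q u x - Cl (Q u) x) = 0
    rw [hu x hx, hQu x hx, hClQu.1 x hx]; ring
  -- Galerkin orthogonality
  have hgal : ∀ z : N → ℝ, (∃ v : N → ℝ, (∀ x ∈ Γ, v x = 0) ∧ z = Q v - Cl (Q v)) →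
      (∀ x ∈ Γ, z x = 0) → ip (K e) z = 0 := by
    intro z hz hzV
    have h1 : K e = fun x => K u x - K uHl x := by
      have h0 : e = u - uHl := rfl
      rw [h0, map_sub]; rfl
    rw [h1, ip_sub_left, hsol z hzV, huHlsol z hz, sub_self]
  have hg0 : ip (K e) (fun x => Q u x - Cl (Q u) x) = 0 := hgal _ hwmem hwV
  have hg1 : ip (K e) uHl = 0 := hgal uHl ⟨v0, hv0, hv0eq⟩ huHlV
  have hee_eg : ip (K e) e = ip (K e) g := by
    have h2 : ip (K e) e - ip (K e) g = ip (K e) (fun x => e x - g x) := (ip_sub_right _ _ _).symm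
    have h3 : (fun x => e x - g x) = (fun x => (Q u x - Cl (Q u) x) - uHl x) := by
      funext x
      show (u x - uHl x) - (u x - (Q u x - Cl (Q u) x)) = (Q u x - Cl (Q u) x) - uHl x
      ring
    rw [h3, ip_sub_right (K e) (fun x => Q u x - Cl (Q u) x) uHl, hg0, hg1] at h2
    linarith
  -- positivity of the K-form on V
  have kpos : ∀ v : N → ℝ, (∀ x ∈ Γ, v x = 0) → 0 ≤ ip (K v) v := fun v hv =>
    le_trans (mul_nonneg hγ.le (Lform_nonneg G pos α _ v)) (hspec v hv).1
  -- expansion of the K-form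
  have ip_comm : ∀ p q : N → ℝ, ip p q = ip q p := fun p q => by
    simp [ip, mul_comm]
  have kexpand : ∀ (a b : N → ℝ) (t : ℝ),
      ip (K (fun x => a x + t * b x)) (fun x => a x + t * b x)
        = ip (K a) a + 2 * ip (K a) b * t + ip (K b) b * t ^ 2 := by
    intro a b t
    have hK : K (fun x => a x + t * b x) = fun x => K a x + t * K b x := by
      have h : (fun x => a x + t * b x) = a + t • b := by funext x; simp
      rw [h, map_add, map_smul]; rfl
    have hsw : ∑ x, K b x * a x = ∑ x, K a x * b x := by
      have h1 : ip (K b) a = ip (K a) b := by rw [hKsym b a, ip_comm]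
      simpa [ip] using h1
    rw [hK]
    show (∑ x, (K a x + t * K b x) * (a x + t * b x)) = _
    calc (∑ x, (K a x + t * K b x) * (a x + t * b x))
        = ∑ x, (K a x * a x + t * (K a x * b x) + t * (K b x * a x) + t ^ 2 * (K b x * b x)) :=
          Finset.sum_congr rfl fun x _ => by ring
      _ = (∑ x, K a x * a x) + t * (∑ x, K a x * b x) + t * (∑ x, K b x * a x)
            + t ^ 2 * (∑ x, K b x * b x) := by
          simp [Finset.sum_add_distrib, Finset.mul_sum]
      _ = _ := by rw [hsw]; show _ = (∑ x, K a x * a x) + 2 * (∑ x, K a x * b x) * t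
                    + (∑ x, K b x * b x) * t ^ 2; ring
  -- Cauchy–Schwarz for the K-form
  have hcsK : ip (K e) g ≤ Real.sqrt (ip (K e) e) * Real.sqrt (ip (K g) g) := by
    refine cs_aux (kpos e heV) fun t => ?_
    rw [← kexpand e g t]
    refine kpos _ fun x hx => ?_
    rw [heV x hx, hgV x hx]; ring
  set E := Lnorm G pos α Finset.univ e with hE
  set Gn := Lnorm G pos α Finset.univ g with hGn
  have hEnn : 0 ≤ E := Real.sqrt_nonneg _
  have hGnn : 0 ≤ Gn := Real.sqrt_nonneg _
  have h5 : Real.sqrt (ip (K e) e) ≤ Real.sqrt γ' * E := by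
    rw [hE, Lnorm, ← Real.sqrt_mul hγ'.le]
    exact Real.sqrt_le_sqrt (hspec e heV).2
  have h6 : Real.sqrt (ip (K g) g) ≤ Real.sqrt γ' * Gn := by
    rw [hGn, Lnorm, ← Real.sqrt_mul hγ'.le]
    exact Real.sqrt_le_sqrt (hspec g hgV).2
  have hmain : γ * E ^ 2 ≤ γ' * (E * Gn) := by
    have hE2 : E ^ 2 = Lform G pos α Finset.univ e e := Real.sq_sqrt (Lform_nonneg G pos α _ e)
    have c1 : γ * E ^ 2 ≤ ip (K e) e := by rw [hE2]; exact (hspec e heV).1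
    have c2 : Real.sqrt (ip (K e) e) * Real.sqrt (ip (K g) g)
        ≤ (Real.sqrt γ' * E) * (Real.sqrt γ' * Gn) :=
      mul_le_mul h5 h6 (Real.sqrt_nonneg _) (by positivity)
    have c3 : (Real.sqrt γ' * E) * (Real.sqrt γ' * Gn) = γ' * (E * Gn) := by
      have hss : Real.sqrt γ' * Real.sqrt γ' = γ' := Real.mul_self_sqrt hγ'.le
      calc (Real.sqrt γ' * E) * (Real.sqrt γ' * Gn)
          = (Real.sqrt γ' * Real.sqrt γ') * (E * Gn) := by ring
        _ = γ' * (E * Gn) := by rw [hss]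
    nlinarith [hee_eg, hcsK]
  have hEG : E ≤ γ⁻¹ * γ' * Gn := by
    rcases eq_or_lt_of_le hEnn with h | h
    · rw [← h]; positivity
    · have h7 : γ * E ≤ γ' * Gn := by nlinarith
      have h8 : E = γ⁻¹ * (γ * E) := by field_simp
      rw [h8, mul_assoc]
      exact mul_le_mul_of_nonneg_left h7 (inv_nonneg.mpr hγ.le)
  -- the corrector discrepancy d has vanishing energy
  set d : N → ℝ := fun x => u x - Q u x + C (Q u) x - C u x with hd
  have hdV : ∀ x ∈ Γ, d x = 0 := by
    intro x hx
    show u x - Q u x + C (Q u) x - C u x = 0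
    rw [hu x hx, hQu x hx, hCQu.1 x hx, hCu.1 x hx]; ring
  have hdPi : Pi d = 0 := by
    funext x
    obtain ⟨T, hT, hxT⟩ := hPcover x
    rw [hPi d T hT x hxT]
    have h1 : avg G pos α T (C (Q u)) = 0 := by
      have h := hPi (C (Q u)) T hT x hxT
      rw [hCQu.2] at h
      exact h.symm
    have h2 : avg G pos α T (C u) = 0 := by
      have h := hPi (C u) T hT x hxT
      rw [hCu.2] at h
      exact h.symm
    have h3 : avg G pos α T (Q u) = avg G pos α T u := by
      have ha := hPi (Q u) T hT x hxT
      rw [hQPi u hu] at ha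
      have hb := hPi u T hT x hxT
      rw [← ha, ← hb]
    have hd4 : d = fun x => (((fun y => u y) x - (fun y => Q u y) x) + (fun y => C (Q u) y) x)
        - (fun y => C u y) x := rfl
    rw [hd4, avg_sub, avg_add, avg_sub]
    show (avg G pos α T u - avg G pos α T (Q u) + avg G pos α T (C (Q u)))
        - avg G pos α T (C u) = 0
    rw [h1, h2, h3]; ring
  have hdK : ip (K d) d = 0 := by
    have hd_eq : d = u - Q u + C (Q u) - C u := rfl
    have hKd : K d = fun x => K u x - K (Q u) x + K (C (Q u)) x - K (C u) x := by
      rw [hd_eq, map_sub, map_add, map_sub]; rfl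
    have hcomb : ip (fun x => K u x - K (Q u) x + K (C (Q u)) x - K (C u) x) d
        = ip (K u) d - ip (K (Q u)) d + ip (K (C (Q u))) d - ip (K (C u)) d := by
      simp [ip, Finset.sum_add_distrib, Finset.sum_sub_distrib, sub_mul, add_mul]
    rw [hKd, hcomb, hCproj (Q u) hQu d ⟨hdV, hdPi⟩, hCproj u hu d ⟨hdV, hdPi⟩]
    ring
  have hLd : Lnorm G pos α Finset.univ d = 0 := by
    have h1 : γ * Lform G pos α Finset.univ d d ≤ 0 := by
      rw [← hdK]; exact (hspec d hdV).1
    have h2 : Lform G pos α Finset.univ d d = 0 :=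
      le_antisymm (by nlinarith [Lform_nonneg G pos α Finset.univ d]) (Lform_nonneg G pos α _ d)
    rw [Lnorm, h2, Real.sqrt_zero]
  -- triangle inequality splitting of Gn
  have hsplit : Gn ≤ Lnorm G pos α Finset.univ (fun x => u x - uH x)
      + Lnorm G pos α Finset.univ (fun x => C (Q u) x - Cl (Q u) x) := by
    have hCuEq : (fun x => u x - uH x) = (fun x => C u x) := by
      funext x
      rw [huH]
      show u x - (u x - C u x) = C u x
      ring
    have hgsplit : g = fun x => C u x + (d x + (Cl (Q u) x - C (Q u) x)) := by
      funext x
      show u x - (Q u x - Cl (Q u) x)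
        = C u x + ((u x - Q u x + C (Q u) x - C u x) + (Cl (Q u) x - C (Q u) x))
      ring
    calc Gn = Lnorm G pos α Finset.univ (fun x => C u x + (d x + (Cl (Q u) x - C (Q u) x))) := by
          rw [hGn, hgsplit]
      _ ≤ Lnorm G pos α Finset.univ (fun x => C u x)
            + Lnorm G pos α Finset.univ (fun x => d x + (Cl (Q u) x - C (Q u) x)) :=
          Lnorm_triangle G pos α _ _ _
      _ ≤ Lnorm G pos α Finset.univ (fun x => C u x)
            + (Lnorm G pos α Finset.univ d
              + Lnorm G pos α Finset.univ (fun x => Cl (Q u) x - C (Q u) x)) := by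
          have := Lnorm_triangle G pos α Finset.univ d (fun x => Cl (Q u) x - C (Q u) x)
          linarith
      _ = Lnorm G pos α Finset.univ (fun x => u x - uH x)
            + Lnorm G pos α Finset.univ (fun x => C (Q u) x - Cl (Q u) x) := by
          rw [hCuEq, hLd, Lnorm_neg_swap G pos α Finset.univ (fun x => Cl (Q u) x) (fun x => C (Q u) x)]
          ring
  calc Lnorm G pos α Finset.univ (fun x => u x - uHl x) = E := rfl
    _ ≤ γ⁻¹ * γ' * Gn := hEG
    _ ≤ _ := by
        apply mul_le_mul_of_nonneg_left hsplit
        positivity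
end

section
/- K-orthogonal decomposition generated by corrected bubbles: assume each b_T lies in V, and let 𝒞z ∈ W denote the K-orthogonal projection of z ∈ V onto W. Then V is the K-orthogonal direct sum of V_H := {z − 𝒞z : z ∈ span{b_T : T ∈ 𝒯_H}} and W: every v ∈ V has a unique decomposition v = v_H + w with v_H ∈ V_H, w ∈ W, and (K v_H, w′) = 0 for all w′ ∈ W; moreover dim V_H = #𝒯_H. -/
open Finset

variable {n : ℕ} {N : Type*}

/-- The corrected bubble space `V_H = {z - 𝒞z : z ∈ span {b_T : T ∈ 𝒯_H}}`. -/
def VHset (P : Finset (Finset N)) (b : Finset N → N → ℝ)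
    (C : (N → ℝ) → N → ℝ) : Set (N → ℝ) :=
  {v | ∃ z ∈ Submodule.span ℝ {g : N → ℝ | ∃ T ∈ P, g = b T}, v = z - C z}


/-!
The element averages form a linear map `A : V → ℝ^𝒯_H` with `W = V ∩ ker A`, and the bubbles
are dual to it: `q_S(b_T) = δ_ST`, since `b_T` is supported in `T` and normalised. The form
`(K·,·)` is positive definite on `V` (`|v|_L = 0` forces `v` to be constant on the connected graph,
hence zero as it vanishes on `Γ`), so the projection `𝒞` is linear and `Φ c = β c - 𝒞 (β c)`, with
`β c = ∑_T c_T b_T`, is a linear map whose image is `V_H`. As `𝒞` lands in `ker A`, `A ∘ Φ = id`: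
so `Φ` is injective, and `v = Φ (A v) + (v - Φ (A v))` is the unique splitting of `v`.
-/

namespace LinearMap.BilinForm

variable {R E F : Type*} [CommRing R] [AddCommGroup E] [Module R E] [AddCommGroup F] [Module R F]
  {B : LinearMap.BilinForm R E} {V W : Submodule R E} {C : E → E}

structure IsOrthProjOn (B : LinearMap.BilinForm R E) (V W : Submodule R E) (C : E → E) : Prop where
  mem : ∀ z ∈ V, C z ∈ W
  apply_left : ∀ z ∈ V, ∀ w ∈ W, B (C z) w = B z w

lemma eq_of_forall_apply_eq (hB : ∀ w ∈ W, B w w = 0 → w = 0) {u u' : E} (hu : u ∈ W)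
    (hu' : u' ∈ W) (h : ∀ w ∈ W, B u w = B u' w) : u = u' := by
  have hd : u - u' ∈ W := W.sub_mem hu hu'
  refine sub_eq_zero.mp (hB _ hd ?_)
  rw [LinearMap.map_sub₂, h _ hd, sub_self]

namespace IsOrthProjOn

lemma map_add (hC : IsOrthProjOn B V W C) (hB : ∀ w ∈ W, B w w = 0 → w = 0) {z z' : E}
    (hz : z ∈ V) (hz' : z' ∈ V) : C (z + z') = C z + C z' :=
  eq_of_forall_apply_eq hB (hC.mem _ (V.add_mem hz hz')) (W.add_mem (hC.mem z hz) (hC.mem z' hz'))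
    fun w hw => by
      simp only [_root_.map_add, LinearMap.add_apply, hC.apply_left _ (V.add_mem hz hz') w hw,
        hC.apply_left z hz w hw, hC.apply_left z' hz' w hw]

lemma map_smul (hC : IsOrthProjOn B V W C) (hB : ∀ w ∈ W, B w w = 0 → w = 0) (c : R) {z : E}
    (hz : z ∈ V) : C (c • z) = c • C z :=
  eq_of_forall_apply_eq hB (hC.mem _ (V.smul_mem c hz)) (W.smul_mem c (hC.mem z hz))
    fun w hw => by
      simp only [LinearMap.map_smul, LinearMap.smul_apply, hC.apply_left _ (V.smul_mem c hz) w hw,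
        hC.apply_left z hz w hw]

def linearMap (hC : IsOrthProjOn B V W C) (hB : ∀ w ∈ W, B w w = 0 → w = 0) : V →ₗ[R] E where
  toFun z := C z
  map_add' z z' := hC.map_add hB z.2 z'.2
  map_smul' c z := hC.map_smul hB c z.2

lemma apply_sub_eq_zero (hC : IsOrthProjOn B V W C) {z w : E} (hz : z ∈ V) (hw : w ∈ W) :
    B (z - C z) w = 0 := by
  rw [LinearMap.map_sub₂, hC.apply_left z hz w hw, sub_self]

variable {A : E →ₗ[R] F} {β : F →ₗ[R] E}

def correctedMap (hC : IsOrthProjOn B V (V ⊓ LinearMap.ker A) C)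
    (hB : ∀ w ∈ V ⊓ LinearMap.ker A, B w w = 0 → w = 0) (hβV : LinearMap.range β ≤ V) :
    F →ₗ[R] E :=
  β - hC.linearMap hB ∘ₗ β.codRestrict V fun c => hβV ⟨c, rfl⟩

variable (hC : IsOrthProjOn B V (V ⊓ LinearMap.ker A) C)
  (hB : ∀ w ∈ V ⊓ LinearMap.ker A, B w w = 0 → w = 0) (hβV : LinearMap.range β ≤ V)

lemma correctedMap_apply (c : F) : hC.correctedMap hB hβV c = β c - C (β c) := rfl

lemma coe_range_correctedMap :
    (LinearMap.range (hC.correctedMap hB hβV) : Set E) =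
      (fun z => z - C z) '' LinearMap.range β := by
  ext v
  simp [correctedMap_apply]

lemma range_correctedMap_le : LinearMap.range (hC.correctedMap hB hβV) ≤ V := by
  rintro _ ⟨c, rfl⟩
  exact V.sub_mem (hβV ⟨c, rfl⟩) (hC.mem _ (hβV ⟨c, rfl⟩)).1

lemma comp_correctedMap (hAβ : A ∘ₗ β = LinearMap.id) :
    A ∘ₗ hC.correctedMap hB hβV = LinearMap.id := by
  ext c
  have hCβ : A (C (β c)) = 0 := (hC.mem _ (hβV ⟨c, rfl⟩)).2
  simp [correctedMap_apply, hCβ, ← LinearMap.comp_apply, hAβ]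

end IsOrthProjOn

end LinearMap.BilinForm

lemma LinearMap.existsUnique_add_of_comp_eq_id {R E F : Type*} [Ring R] [AddCommGroup E]
    [Module R E] [AddCommGroup F] [Module R F] {V : Submodule R E} {A : E →ₗ[R] F}
    {Φ : F →ₗ[R] E} (hΦ : A ∘ₗ Φ = LinearMap.id) (hΦV : LinearMap.range Φ ≤ V) {v : E}
    (hv : v ∈ V) :
    ∃! p : E × E, p.1 ∈ LinearMap.range Φ ∧ p.2 ∈ V ⊓ LinearMap.ker A ∧ v = p.1 + p.2 := by
  have hAΦ (c : F) : A (Φ c) = c := LinearMap.congr_fun hΦ c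
  refine ⟨(Φ (A v), v - Φ (A v)), ⟨⟨A v, rfl⟩, ⟨V.sub_mem hv (hΦV ⟨A v, rfl⟩), ?_⟩, ?_⟩, ?_⟩
  · simp [hAΦ]
  · simp
  · rintro ⟨_, w⟩ ⟨⟨c, rfl⟩, ⟨-, hw⟩, rfl⟩
    have hc : A (Φ c + w) = c := by simp [hAΦ, LinearMap.mem_ker.mp hw]
    simp [hc]

lemma SimpleGraph.Reachable.eq_of_forall_adj {G : SimpleGraph N} {X : Type*} {f : N → X}
    (hf : ∀ x y, G.Adj x y → f x = f y) {x y : N} (h : G.Reachable x y) : f x = f y := by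
  obtain ⟨w⟩ := h
  induction w with
  | nil => rfl
  | cons hxy _ ih => exact (hf _ _ hxy).trans ih

def zeroOn {R : Type*} [Semiring R] (Γ : Set N) : Submodule R (N → R) where
  carrier := {v | ∀ x ∈ Γ, v x = 0}
  add_mem' hu hv x hx := by simp [hu x hx, hv x hx]
  zero_mem' _ _ := rfl
  smul_mem' c v hv x hx := by simp [hv x hx]

lemma VHset_eq_image (P : Finset (Finset N)) (b : Finset N → N → ℝ) (C : (N → ℝ) → N → ℝ) :
    VHset P b C =
      (fun z => z - C z) '' LinearMap.range (Fintype.linearCombination ℝ fun T : P => b T) := by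
  have hgen : Set.range (fun T : P => b T) = {g | ∃ T ∈ P, g = b T} := by
    ext g; simp [eq_comm]
  ext v
  simp [VHset, Fintype.range_linearCombination, hgen, eq_comm]

section Forms

variable [Fintype N] (G : SimpleGraph N) [DecidableRel G.Adj] (pos : N → EuclideanSpace ℝ (Fin n))
  (α : ℝ)

lemma Lform_self_nonneg (v : N → ℝ) : 0 ≤ Lform G pos α univ v v := by
  unfold Lform
  exact sum_nonneg fun x _ => mul_nonneg (by norm_num) <| sum_nonneg fun y _ =>
    div_nonneg (mul_self_nonneg _) (by positivity)

variable {G pos α} in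
lemma eq_of_adj_of_Lform_self_eq_zero (hdist : ∀ x y : N, G.Adj x y → 0 < dist (pos x) (pos y))
    {v : N → ℝ} (h : Lform G pos α univ v v = 0) {x y : N} (hxy : G.Adj x y) : v x = v y := by
  have hterm (x y : N) : 0 ≤ (v x - v y) * (v x - v y) / dist (pos x) (pos y) ^ α :=
    div_nonneg (mul_self_nonneg _) (by positivity)
  have hx := (sum_eq_zero_iff_of_nonneg fun x _ =>
    mul_nonneg (by norm_num) (sum_nonneg fun y _ => hterm x y)).mp h x (mem_univ x)
  have hxy' := (sum_eq_zero_iff_of_nonneg fun y _ => hterm x y).mp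
    ((mul_eq_zero.mp hx).resolve_left (by norm_num)) y ((G.mem_neighborFinset x y).mpr hxy)
  rw [div_eq_zero_iff, mul_self_eq_zero, sub_eq_zero] at hxy'
  exact hxy'.resolve_right (Real.rpow_pos_of_pos (hdist x y hxy) α).ne'

variable {G pos α} in
lemma eq_zero_of_ip_apply_self_eq_zero (hdist : ∀ x y : N, G.Adj x y → 0 < dist (pos x) (pos y))
    (hconn : G.Connected) {Γ : Set N} (hΓ : Γ.Nonempty) {γ : ℝ} (hγ : 0 < γ)
    {K : (N → ℝ) →ₗ[ℝ] (N → ℝ)} (hK : ∀ v ∈ zeroOn Γ, γ * Lform G pos α univ v v ≤ ip (K v) v)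
    {v : N → ℝ} (hv : v ∈ zeroOn Γ) (h : ip (K v) v = 0) : v = 0 := by
  have hL : Lform G pos α univ v v = 0 := by
    nlinarith [hK v hv, Lform_self_nonneg G pos α v]
  obtain ⟨g, hg⟩ := hΓ
  funext x
  have hconst : ∀ a b, G.Adj a b → v a = v b := fun _ _ => eq_of_adj_of_Lform_self_eq_zero hdist hL
  rw [(hconn.preconnected x g).eq_of_forall_adj hconst]
  exact hv g hg

noncomputable def avgₗ (T : Finset N) : (N → ℝ) →ₗ[ℝ] ℝ where
  toFun := avg G pos α T
  map_add' u v := by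
    simp only [avg, Mform, Pi.add_apply, add_mul, mul_add, sum_add_distrib, add_div]
  map_smul' c v := by
    simp only [avg, Mform, Pi.smul_apply, smul_eq_mul, RingHom.id_apply, ← mul_div_assoc, mul_sum]
    congr 1
    exact sum_congr rfl fun x _ => sum_congr rfl fun y _ => by ring

lemma avg_smul (T : Finset N) (c : ℝ) (u : N → ℝ) :
    avg G pos α T (c • u) = c * avg G pos α T u :=
  (avgₗ G pos α T).map_smul c u

noncomputable def elementAverages (P : Finset (Finset N)) : (N → ℝ) →ₗ[ℝ] (P → ℝ) :=
  LinearMap.pi fun T => avgₗ G pos α T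

lemma elementAverages_apply (P : Finset (Finset N)) (v : N → ℝ) (T : P) :
    elementAverages G pos α P v T = avg G pos α T v := rfl

variable {G pos α} in
lemma eq_zero_iff_elementAverages_eq_zero {P : Finset (Finset N)} (hPne : ∀ T ∈ P, T.Nonempty)
    (hPcover : ∀ x : N, ∃ T ∈ P, x ∈ T) {p v : N → ℝ}
    (hp : ∀ T ∈ P, ∀ x ∈ T, p x = avg G pos α T v) :
    p = 0 ↔ elementAverages G pos α P v = 0 := by
  constructor
  · rintro rfl
    funext ⟨T, hT⟩
    obtain ⟨x, hx⟩ := hPne T hT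
    exact (hp T hT x hx).symm
  · intro h
    funext x
    obtain ⟨T, hT, hx⟩ := hPcover x
    exact (hp T hT x hx).trans (congrFun h ⟨T, hT⟩)

lemma avg_eq_zero_of_forall_mem {T : Finset N} {u : N → ℝ} (hu : ∀ x ∈ T, u x = 0) :
    avg G pos α T u = 0 := by
  have hnum : Mform G pos α T u (fun _ => 1) = 0 := sum_eq_zero fun x hx => by simp [hu x hx]
  rw [avg, hnum, zero_div]

noncomputable def bubble [DecidableEq N] (T bnd : Finset N) : N → ℝ :=
  fun x => btilde G pos T bnd x / avg G pos α T (btilde G pos T bnd)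

variable {G pos α} [DecidableEq N] {P : Finset (Finset N)}

lemma elementAverages_bubble (hPdisj : ∀ T ∈ P, ∀ S ∈ P, T ≠ S → Disjoint T S) {T bnd : Finset N}
    (hT : T ∈ P) (hq : avg G pos α T (btilde G pos T bnd) ≠ 0) :
    elementAverages G pos α P (bubble G pos α T bnd) = Pi.single ⟨T, hT⟩ 1 := by
  funext ⟨S, hS⟩
  rw [elementAverages_apply]
  by_cases hST : S = T
  · subst hST
    have hb : bubble G pos α S bnd =
        (avg G pos α S (btilde G pos S bnd))⁻¹ • btilde G pos S bnd := by
      funext x; simp [bubble, div_eq_inv_mul]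
    rw [hb, avg_smul, inv_mul_cancel₀ hq, Pi.single_eq_same]
  · rw [Pi.single_eq_of_ne (by simpa using hST)]
    refine avg_eq_zero_of_forall_mem G pos α fun x hx => ?_
    have hxT : x ∉ T := disjoint_left.mp (hPdisj S hS T hT hST) hx
    simp [bubble, btilde, hxT]

lemma elementAverages_comp_linearCombination_bubble
    (hPdisj : ∀ T ∈ P, ∀ S ∈ P, T ≠ S → Disjoint T S) {bnd : Finset N → Finset N}
    (hq : ∀ T ∈ P, avg G pos α T (btilde G pos T (bnd T)) ≠ 0) :
    elementAverages G pos α P ∘ₗ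
      Fintype.linearCombination ℝ (fun T : P => bubble G pos α T (bnd T)) = LinearMap.id :=
  (Pi.basisFun ℝ P).ext fun T => by
    simp [elementAverages_bubble hPdisj T.2 (hq T T.2)]

end Forms

theorem stmt17_general [Fintype N] [DecidableEq N] (G : SimpleGraph N) [DecidableRel G.Adj]
    (pos : N → EuclideanSpace ℝ (Fin n)) (α : ℝ)
    (hdist : ∀ x y : N, G.Adj x y → 0 < dist (pos x) (pos y))
    (hconn : G.Connected)
    (Γ : Set N) (hΓ : Γ.Nonempty)
    (P : Finset (Finset N))
    (hPne : ∀ T ∈ P, T.Nonempty)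
    (hPdisj : ∀ T ∈ P, ∀ S ∈ P, T ≠ S → Disjoint T S)
    (hPcover : ∀ x : N, ∃ T ∈ P, x ∈ T)
    (Pi : (N → ℝ) → (N → ℝ))
    (hPi : ∀ v : N → ℝ, ∀ T ∈ P, ∀ x ∈ T, Pi v x = avg G pos α T v)
    (bnd : Finset N → Finset N)
    (hqpos : ∀ T ∈ P, 0 < avg G pos α T (btilde G pos T (bnd T)))
    (b : Finset N → N → ℝ)
    (hb : ∀ T ∈ P, b T = fun x =>
      btilde G pos T (bnd T) x / avg G pos α T (btilde G pos T (bnd T)))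
    (hbV : ∀ T ∈ P, ∀ x ∈ Γ, b T x = 0)
    (K : (N → ℝ) →ₗ[ℝ] (N → ℝ))
    (γ γ' : ℝ) (hγ : 0 < γ)
    (hspec : ∀ v : N → ℝ, (∀ x ∈ Γ, v x = 0) →
      γ * Lform G pos α Finset.univ v v ≤ ip (K v) v ∧
        ip (K v) v ≤ γ' * Lform G pos α Finset.univ v v)
    (C : (N → ℝ) → (N → ℝ))
    (hCW : ∀ z : N → ℝ, (∀ x ∈ Γ, z x = 0) → (∀ x ∈ Γ, C z x = 0) ∧ Pi (C z) = 0)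
    (hCproj : ∀ z : N → ℝ, (∀ x ∈ Γ, z x = 0) →
      ∀ w : N → ℝ, ((∀ x ∈ Γ, w x = 0) ∧ Pi w = 0) → ip (K (C z)) w = ip (K z) w) :
    (∀ v : N → ℝ, (∀ x ∈ Γ, v x = 0) →
      ∃! p : (N → ℝ) × (N → ℝ), p.1 ∈ VHset P b C ∧
        ((∀ x ∈ Γ, p.2 x = 0) ∧ Pi p.2 = 0) ∧ v = p.1 + p.2) ∧
    (∀ vH ∈ VHset P b C, ∀ w : N → ℝ,
      ((∀ x ∈ Γ, w x = 0) ∧ Pi w = 0) → ip (K vH) w = 0) ∧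
    (∃ VH : Submodule ℝ (N → ℝ), (VH : Set (N → ℝ)) = VHset P b C ∧
      Module.finrank ℝ VH = P.card) := by
  set A := elementAverages G pos α P
  set β := Fintype.linearCombination ℝ fun T : P => b T with hβ
  have hW (w : N → ℝ) : ((∀ x ∈ Γ, w x = 0) ∧ Pi w = 0) ↔ w ∈ zeroOn Γ ⊓ LinearMap.ker A := by
    rw [Submodule.mem_inf, LinearMap.mem_ker,
      ← eq_zero_iff_elementAverages_eq_zero hPne hPcover (hPi w)]
    rfl
  have hAβ : A ∘ₗ β = LinearMap.id := by
    rw [hβ, show (fun T : P => b T) = fun T : P => bubble G pos α T (bnd T) from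
      funext fun T => hb T T.2]
    exact elementAverages_comp_linearCombination_bubble hPdisj fun T hT => (hqpos T hT).ne'
  have hβV : LinearMap.range β ≤ zeroOn Γ := by
    rw [Fintype.range_linearCombination, Submodule.span_le]
    rintro _ ⟨T, rfl⟩
    exact hbV T T.2
  let B : LinearMap.BilinForm ℝ (N → ℝ) := (dotProductBilin ℝ ℝ).comp K
  have hB : ∀ w ∈ zeroOn Γ ⊓ LinearMap.ker A, B w w = 0 → w = 0 := fun w hw =>
    eq_zero_of_ip_apply_self_eq_zero hdist hconn hΓ hγ (fun v hv => (hspec v hv).1) hw.1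
  have hC : LinearMap.BilinForm.IsOrthProjOn B (zeroOn Γ) (zeroOn Γ ⊓ LinearMap.ker A) C :=
    ⟨fun z hz => (hW _).mp (hCW z hz), fun z hz w hw => hCproj z hz w ((hW w).mpr hw)⟩
  have hVH : VHset P b C = LinearMap.range (hC.correctedMap hB hβV) := by
    rw [hC.coe_range_correctedMap hB hβV, VHset_eq_image]
  refine ⟨fun v hv => ?_, fun vH hvH w hw => ?_, ⟨_, hVH.symm, ?_⟩⟩
  · simpa only [hVH, hW, SetLike.mem_coe] using LinearMap.existsUnique_add_of_comp_eq_id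
      (hC.comp_correctedMap hB hβV hAβ) (hC.range_correctedMap_le hB hβV) hv
  · rw [VHset_eq_image] at hvH
    obtain ⟨z, hz, rfl⟩ := hvH
    exact hC.apply_sub_eq_zero (hβV hz) ((hW w).mp hw)
  · rw [LinearMap.finrank_range_of_inj, Module.finrank_fintype_fun_eq_card, Fintype.card_coe]
    exact LinearMap.injective_of_comp_eq_id _ _ (hC.comp_correctedMap hB hβV hAβ)

theorem stmt17 [Fintype N] [DecidableEq N] (G : SimpleGraph N) [DecidableRel G.Adj]
    (pos : N → EuclideanSpace ℝ (Fin n)) (α : ℝ)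
    (hα : 0 ≤ α ∧ α ≤ 2) (hpos : Function.Injective pos)
    (hdist : ∀ x y : N, G.Adj x y → 0 < dist (pos x) (pos y))
    (hcard : 1 < Fintype.card N) (hconn : G.Connected)
    (Γ : Set N) (hΓ : Γ.Nonempty)
    (P : Finset (Finset N))
    (hPne : ∀ T ∈ P, T.Nonempty)
    (hPdisj : ∀ T ∈ P, ∀ S ∈ P, T ≠ S → Disjoint T S)
    (hPcover : ∀ x : N, ∃ T ∈ P, x ∈ T)
    (Pi : (N → ℝ) → (N → ℝ))
    (hPi : ∀ v : N → ℝ, ∀ T ∈ P, ∀ x ∈ T, Pi v x = avg G pos α T v)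
    (bnd : Finset N → Finset N)
    (hbndsub : ∀ T ∈ P, bnd T ⊆ T) (hbndne : ∀ T ∈ P, (bnd T).Nonempty)
    (hbndadj : ∀ T ∈ P, ∀ x ∈ T, (∃ y : N, G.Adj x y ∧ y ∉ T) → x ∈ bnd T)
    (hbndΓ : ∀ T ∈ P, ∀ x ∈ T, x ∈ Γ → x ∈ bnd T)
    (hjoin : ∀ T ∈ P, ∀ x ∈ T, ∃ y ∈ bnd T, ∃ w : G.Walk x y, ∀ z ∈ w.support, z ∈ T)
    (hqpos : ∀ T ∈ P, 0 < avg G pos α T (btilde G pos T (bnd T)))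
    (b : Finset N → N → ℝ)
    (hb : ∀ T ∈ P, b T = fun x =>
      btilde G pos T (bnd T) x / avg G pos α T (btilde G pos T (bnd T)))
    (hbV : ∀ T ∈ P, ∀ x ∈ Γ, b T x = 0)
    (K : (N → ℝ) →ₗ[ℝ] (N → ℝ))
    (hKsym : ∀ u v : N → ℝ, ip (K u) v = ip u (K v))
    (γ γ' : ℝ) (hγ : 0 < γ) (hγγ' : γ ≤ γ')
    (hspec : ∀ v : N → ℝ, (∀ x ∈ Γ, v x = 0) →
      γ * Lform G pos α Finset.univ v v ≤ ip (K v) v ∧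
        ip (K v) v ≤ γ' * Lform G pos α Finset.univ v v)
    (C : (N → ℝ) → (N → ℝ))
    (hCW : ∀ z : N → ℝ, (∀ x ∈ Γ, z x = 0) → (∀ x ∈ Γ, C z x = 0) ∧ Pi (C z) = 0)
    (hCproj : ∀ z : N → ℝ, (∀ x ∈ Γ, z x = 0) →
      ∀ w : N → ℝ, ((∀ x ∈ Γ, w x = 0) ∧ Pi w = 0) → ip (K (C z)) w = ip (K z) w) :
    (∀ v : N → ℝ, (∀ x ∈ Γ, v x = 0) →
      ∃! p : (N → ℝ) × (N → ℝ), p.1 ∈ VHset P b C ∧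
        ((∀ x ∈ Γ, p.2 x = 0) ∧ Pi p.2 = 0) ∧ v = p.1 + p.2) ∧
    (∀ vH ∈ VHset P b C, ∀ w : N → ℝ,
      ((∀ x ∈ Γ, w x = 0) ∧ Pi w = 0) → ip (K vH) w = 0) ∧
    (∃ VH : Submodule ℝ (N → ℝ), (VH : Set (N → ℝ)) = VHset P b C ∧
      Module.finrank ℝ VH = P.card) :=
  stmt17_general G pos α hdist hconn Γ hΓ P hPne hPdisj hPcover Pi hPi bnd hqpos b hb hbV K γ γ' hγ
    hspec C hCW hCproj
end
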